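/- arXiv:2106.07830 — 2 statements merged into one kernel-verified Lean document; each statement's English description precedes it below -/
import Mathlib

section
/- There exist symmetric positive definite matrices H₁, H₂ and positive diagonal matrices C₁, C₂ such that H₁C₁ + H₂C₂ has a negative real eigenvalue. -/
/-!
The witness from the paper gives `H₁C₁ + H₂C₂ = !![93/100, 2; 2, 4]`, whose determinant is
negative. A real matrix with negative determinant has a negative real eigenvalue: the
polynomial `s ↦ det (s • 1 + A)` is monic, so it is positive for large `s`, while its value at
`0` is `det A < 0`; by the intermediate value theorem it vanishes at some `s > 0`, and then `-s`
is a root of the characteristic polynomial of `A`.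
-/

open Matrix Polynomial

namespace Matrix

theorem posDef_fin_two {a b d : ℝ} (ha : 0 < a) (hdet : 0 < a * d - b * b) :
    !![a, b; b, d].PosDef := by
  refine posDef_iff_dotProduct_mulVec.2 ⟨?_, fun x hx => ?_⟩
  · ext i j
    fin_cases i <;> fin_cases j <;> rfl
  have hquad : star x ⬝ᵥ (!![a, b; b, d] *ᵥ x) =
      a * x 0 ^ 2 + 2 * b * x 0 * x 1 + d * x 1 ^ 2 := by
    simp [dotProduct, mulVec, Fin.sum_univ_two]
    ring
  have hcompl : a * (a * x 0 ^ 2 + 2 * b * x 0 * x 1 + d * x 1 ^ 2) =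
      (a * x 0 + b * x 1) ^ 2 + (a * d - b * b) * x 1 ^ 2 := by ring
  rw [hquad]
  refine pos_of_mul_pos_right (hcompl ▸ ?_) ha.le
  rcases eq_or_ne (x 1) 0 with h1 | h1
  · have h0 : x 0 ≠ 0 := fun h0 => hx (by ext i; fin_cases i <;> assumption)
    simp only [h1, mul_zero, add_zero, ne_eq, OfNat.ofNat_ne_zero, not_false_eq_true, zero_pow]
    positivity
  · exact add_pos_of_nonneg_of_pos (sq_nonneg _) (mul_pos hdet (sq_pos_of_ne_zero h1))

theorem exists_neg_isRoot_charpoly_of_det_neg {n : Type*} [Fintype n] [DecidableEq n]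
    {A : Matrix n n ℝ} (hA : A.det < 0) : ∃ μ < 0, A.charpoly.IsRoot μ := by
  set q := (-A).charpoly
  have hq (s : ℝ) : q.eval s = (scalar n s + A).det := by
    rw [eval_charpoly, sub_neg_eq_add]
  have hcard : 0 < Fintype.card n := by
    rcases isEmpty_or_nonempty n with _ | _
    · norm_num at hA
    · exact Fintype.card_pos
  have hlim : Filter.Tendsto q.eval Filter.atTop Filter.atTop :=
    q.tendsto_atTop_of_leadingCoeff_nonneg
      (by rw [charpoly_degree_eq_dim]; exact_mod_cast hcard)
      (by rw [(charpoly_monic _).leadingCoeff]; exact zero_le_one)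
  obtain ⟨b, hqb, hb⟩ :=
    (hlim.eventually_gt_atTop 0 |>.and (Filter.eventually_ge_atTop 0)).exists
  have hq0 : q.eval 0 < 0 := by simpa [hq] using hA
  obtain ⟨s, ⟨hs, -⟩, hqs⟩ :=
    intermediate_value_Ioo hb q.continuous.continuousOn ⟨hq0, hqb⟩
  refine ⟨-s, neg_neg_of_pos hs, ?_⟩
  rw [IsRoot, eval_charpoly, show scalar n (-s) - A = -(scalar n s + A) by simp; abel,
    det_neg, ← hq, show q.eval s = 0 from hqs, mul_zero]

end Matrix

/-- There exist symmetric positive definite `H₁, H₂` and positive diagonal `C₁, C₂` such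
that `H₁C₁ + H₂C₂` has a negative real eigenvalue. -/
theorem stmt_7 :
    ∃ H₁ H₂ C₁ C₂ : Matrix (Fin 2) (Fin 2) ℝ,
      H₁.PosDef ∧ H₂.PosDef ∧
      C₁.IsDiag ∧ C₂.IsDiag ∧ (∀ i, 0 < C₁ i i) ∧ (∀ i, 0 < C₂ i i) ∧
      ∃ μ : ℝ, μ < 0 ∧ (H₁ * C₁ + H₂ * C₂).charpoly.IsRoot μ := by
  refine ⟨!![7/10, 2; 2, 7], !![3, 2; 2, 2], diagonal ![9/10, 4/10], diagonal ![1/10, 6/10],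
    posDef_fin_two (by norm_num) (by norm_num), posDef_fin_two (by norm_num) (by norm_num),
    isDiag_diagonal _, isDiag_diagonal _, ?_, ?_, exists_neg_isRoot_charpoly_of_det_neg ?_⟩
  · intro i; fin_cases i <;> simp
  · intro i; fin_cases i <;> simp
  have hsum : !![7/10, 2; 2, 7] * diagonal ![9/10, 4/10] + !![3, 2; 2, 2] * diagonal ![1/10, 6/10] =
      (!![93/100, 2; 2, 4] : Matrix (Fin 2) (Fin 2) ℝ) := by
    ext i j
    fin_cases i <;> fin_cases j <;> simp [vecMul, dotProduct, Fin.sum_univ_two] <;> norm_num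
  rw [hsum, det_fin_two_of]
  norm_num
end

section
/- For a symmetric positive semidefinite matrix H and a diagonal matrix C with diagonal entries in (0,1], every eigenvalue of HC satisfies λⱼ(HC) ≤ λⱼ(H), where eigenvalues are ordered decreasingly. -/
/-!
Write `H = R²` with `R = √H`. Then `HC = R (RC)` has the same characteristic polynomial as
the symmetric matrix `RCR`, and `C ≤ 1` gives `RCR ≤ R·1·R = H` in the Loewner order. So it
suffices that the sorted eigenvalues of symmetric operators are monotone in the Loewner order
(Weyl). If `T ≤ S`, the span of the first `j + 1` eigenvectors of `T` and the span of the
eigenvectors `j, j + 1, …` of `S` have dimensions adding up to `n + 1`, so they share a nonzero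
vector `x`, and `λⱼ(T) ‖x‖² ≤ ⟪T x, x⟫ ≤ ⟪S x, x⟫ ≤ λⱼ(S) ‖x‖²`.
-/

open Module RCLike
open scoped InnerProductSpace

namespace OrthonormalBasis

variable {𝕜 E ι : Type*} [RCLike 𝕜] [NormedAddCommGroup E] [InnerProductSpace 𝕜 E] [Fintype ι]

theorem sum_norm_sq_repr (b : OrthonormalBasis ι 𝕜 E) (x : E) :
    ∑ i, ‖b.repr x i‖ ^ 2 = ‖x‖ ^ 2 := by
  rw [← b.repr.norm_map x, EuclideanSpace.norm_sq_eq]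

theorem repr_eq_zero_of_mem_span_image (b : OrthonormalBasis ι 𝕜 E) {s : Set ι} {x : E}
    (hx : x ∈ Submodule.span 𝕜 (b '' s)) {i : ι} (hi : i ∉ s) : b.repr x i = 0 := by
  have hspan : Submodule.span 𝕜 (b '' s) ≤ (𝕜 ∙ b i)ᗮ := by
    rw [Submodule.span_le]
    rintro _ ⟨k, hk, rfl⟩
    exact Submodule.mem_orthogonal_singleton_iff_inner_right.mpr
      (b.orthonormal.2 fun h => hi (h ▸ hk))
  rw [b.repr_apply_apply]
  exact Submodule.mem_orthogonal_singleton_iff_inner_right.mp (hspan hx)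

theorem finrank_span_image (b : OrthonormalBasis ι 𝕜 E) (s : Finset ι) :
    finrank 𝕜 (Submodule.span 𝕜 (b '' s)) = s.card := by
  rw [← Subtype.range_coe (s := (s : Set ι)), ← Set.range_comp,
    finrank_span_eq_card (b.orthonormal.linearIndependent.comp _ Subtype.val_injective)]
  exact Fintype.card_coe s

end OrthonormalBasis

namespace LinearMap.IsSymmetric

variable {𝕜 E : Type*} [RCLike 𝕜] [NormedAddCommGroup E] [InnerProductSpace 𝕜 E]
  [FiniteDimensional 𝕜 E] {n : ℕ} (hn : finrank 𝕜 E = n)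
  {T S : E →ₗ[𝕜] E}

theorem re_inner_apply_self_eq_sum (hT : T.IsSymmetric) (x : E) :
    re ⟪T x, x⟫_𝕜 = ∑ i, hT.eigenvalues hn i * ‖(hT.eigenvectorBasis hn).repr x i‖ ^ 2 := by
  rw [← (hT.eigenvectorBasis hn).repr.inner_map_map, PiLp.inner_apply, map_sum]
  refine Finset.sum_congr rfl fun i _ => ?_
  rw [eigenvectorBasis_apply_self_apply, ← smul_eq_mul, inner_smul_left, conj_ofReal,
    re_ofReal_mul, inner_self_eq_norm_sq]

theorem le_re_inner_apply_self_of_mem_span (hT : T.IsSymmetric) {s : Set (Fin n)} {c : ℝ}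
    (hc : ∀ i ∈ s, c ≤ hT.eigenvalues hn i) {x : E}
    (hx : x ∈ Submodule.span 𝕜 (hT.eigenvectorBasis hn '' s)) :
    c * ‖x‖ ^ 2 ≤ re ⟪T x, x⟫_𝕜 := by
  rw [re_inner_apply_self_eq_sum, ← (hT.eigenvectorBasis hn).sum_norm_sq_repr, Finset.mul_sum]
  refine Finset.sum_le_sum fun i _ => ?_
  by_cases hi : i ∈ s
  · exact mul_le_mul_of_nonneg_right (hc i hi) (sq_nonneg _)
  · simp [(hT.eigenvectorBasis hn).repr_eq_zero_of_mem_span_image hx hi]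

theorem re_inner_apply_self_le_of_mem_span (hT : T.IsSymmetric) {s : Set (Fin n)} {c : ℝ}
    (hc : ∀ i ∈ s, hT.eigenvalues hn i ≤ c) {x : E}
    (hx : x ∈ Submodule.span 𝕜 (hT.eigenvectorBasis hn '' s)) :
    re ⟪T x, x⟫_𝕜 ≤ c * ‖x‖ ^ 2 := by
  rw [re_inner_apply_self_eq_sum, ← (hT.eigenvectorBasis hn).sum_norm_sq_repr, Finset.mul_sum]
  refine Finset.sum_le_sum fun i _ => ?_
  by_cases hi : i ∈ s
  · exact mul_le_mul_of_nonneg_right (hc i hi) (sq_nonneg _)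
  · simp [(hT.eigenvectorBasis hn).repr_eq_zero_of_mem_span_image hx hi]

theorem eigenvalues_le_of_le (hT : T.IsSymmetric) (hS : S.IsSymmetric) (hTS : T ≤ S)
    (j : Fin n) : hT.eigenvalues hn j ≤ hS.eigenvalues hn j := by
  set V := Submodule.span 𝕜 (hT.eigenvectorBasis hn '' (Finset.Iic j : Finset (Fin n)))
  set W := Submodule.span 𝕜 (hS.eigenvectorBasis hn '' (Finset.Ici j : Finset (Fin n)))
  have hdim : finrank 𝕜 E < finrank 𝕜 V + finrank 𝕜 W := by
    rw [(hT.eigenvectorBasis hn).finrank_span_image, (hS.eigenvectorBasis hn).finrank_span_image,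
      Fin.card_Iic, Fin.card_Ici, hn]
    omega
  obtain ⟨x, hxV, hxW, hx⟩ : ∃ x ∈ V, x ∈ W ∧ x ≠ 0 := by
    by_contra! h
    exact hdim.not_ge (Submodule.finrank_add_finrank_le_of_disjoint
      (Submodule.disjoint_def.mpr h))
  have hTx : hT.eigenvalues hn j * ‖x‖ ^ 2 ≤ re ⟪T x, x⟫_𝕜 :=
    hT.le_re_inner_apply_self_of_mem_span hn
      (fun i hi => hT.eigenvalues_antitone hn (Finset.mem_Iic.mp hi)) hxV
  have hSx : re ⟪S x, x⟫_𝕜 ≤ hS.eigenvalues hn j * ‖x‖ ^ 2 :=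
    hS.re_inner_apply_self_le_of_mem_span hn
      (fun i hi => hS.eigenvalues_antitone hn (Finset.mem_Ici.mp hi)) hxW
  have hTSx : re ⟪T x, x⟫_𝕜 ≤ re ⟪S x, x⟫_𝕜 := by
    have := hTS.re_inner_nonneg_left x
    rwa [LinearMap.sub_apply, inner_sub_left, map_sub, sub_nonneg] at this
  exact le_of_mul_le_mul_right (hTx.trans (hTSx.trans hSx)) (by positivity)

end LinearMap.IsSymmetric

open Matrix
open scoped MatrixOrder ComplexOrder

namespace Matrix

variable {𝕜 n : Type*} [RCLike 𝕜] [DecidableEq n]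

theorem diagonal_le_one {d : n → 𝕜} (hd : d ≤ 1) : diagonal d ≤ 1 := by
  rw [le_iff, ← diagonal_one, diagonal_sub, posSemidef_diagonal_iff]
  exact fun i => sub_nonneg.mpr (hd i)

variable [Fintype n]

namespace IsHermitian

theorem eigenvalues₀_le_of_le {A B : Matrix n n 𝕜} (hA : A.IsHermitian) (hB : B.IsHermitian)
    (hAB : A ≤ B) (j : Fin (Fintype.card n)) : hA.eigenvalues₀ j ≤ hB.eigenvalues₀ j := by
  refine LinearMap.IsSymmetric.eigenvalues_le_of_le _ _ _ ?_ j
  rw [LinearMap.le_def, ← map_sub, isPositive_toEuclideanLin_iff]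
  exact le_iff.mp hAB

theorem card_roots_charpoly {A : Matrix n n ℝ} (hA : A.IsHermitian) :
    Multiset.card A.charpoly.roots = Fintype.card n := by
  simp [hA.roots_charpoly_eq_eigenvalues]

theorem getD_sort_roots_charpoly {A : Matrix n n ℝ} (hA : A.IsHermitian)
    (j : Fin (Fintype.card n)) : (A.charpoly.roots.sort (· ≥ ·)).getD j 0 = hA.eigenvalues₀ j := by
  have h := hA.sort_roots_charpoly_eq_eigenvalues₀
  simp only [RCLike.re_to_real, Multiset.map_id'] at h
  simp [h]

theorem getD_sort_roots_charpoly_le_of_le {A B : Matrix n n ℝ} (hA : A.IsHermitian)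
    (hB : B.IsHermitian) (hAB : A ≤ B) (j : ℕ) :
    (A.charpoly.roots.sort (· ≥ ·)).getD j 0 ≤ (B.charpoly.roots.sort (· ≥ ·)).getD j 0 := by
  by_cases hj : j < Fintype.card n
  · rw [show j = (⟨j, hj⟩ : Fin (Fintype.card n)) from rfl, hA.getD_sort_roots_charpoly,
      hB.getD_sort_roots_charpoly]
    exact eigenvalues₀_le_of_le hA hB hAB _
  · rw [List.getD_eq_default _ _ (by simpa [hA.card_roots_charpoly] using hj),
      List.getD_eq_default _ _ (by simpa [hB.card_roots_charpoly] using hj)]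

end IsHermitian

end Matrix

theorem stmt_8_general (n : ℕ) (H C : Matrix (Fin n) (Fin n) ℝ)
    (hH : H.PosSemidef) (hC : C.IsDiag) (hC2 : ∀ i, C i i ≤ 1) :
    Multiset.card (H * C).charpoly.roots = n ∧
    Multiset.card H.charpoly.roots = n ∧
    ∀ j : Fin n,
      (((H * C).charpoly.roots.sort (· ≥ ·)).getD j 0) ≤
        ((H.charpoly.roots.sort (· ≥ ·)).getD j 0) := by
  obtain ⟨d, rfl⟩ : ∃ d, C = diagonal d := ⟨C.diag, hC.diagonal_diag.symm⟩
  set R := CFC.sqrt H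
  have hR : star R = R := (IsSelfAdjoint.of_nonneg (CFC.sqrt_nonneg H)).star_eq
  have hRR : R * R = H := CFC.sqrt_mul_sqrt_self H hH.nonneg
  have hS : (R * diagonal d * R).IsHermitian := by
    have h := isHermitian_conjTranspose_mul_mul R (isHermitian_diagonal d)
    rwa [← star_eq_conjTranspose, hR] at h
  have hSH : R * diagonal d * R ≤ H := by
    have hd : diagonal d ≤ 1 := diagonal_le_one fun i => by simpa using hC2 i
    simpa [hR, hRR] using star_left_conjugate_le_conjugate hd R
  have hcharpoly : (H * diagonal d).charpoly = (R * diagonal d * R).charpoly := by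
    rw [← hRR, mul_assoc, charpoly_mul_comm, mul_assoc]
  rw [hcharpoly]
  exact ⟨by simpa using hS.card_roots_charpoly, by simpa using hH.1.card_roots_charpoly,
    fun j => hS.getD_sort_roots_charpoly_le_of_le hH.1 hSH j⟩

/-- For symmetric PSD `H` and diagonal `C` with entries in `(0,1]`, the matrices `H` and
`H*C` each have `n` real eigenvalues (roots of the characteristic polynomial, with
multiplicity), and when both spectra are ordered decreasingly we have
`λⱼ(HC) ≤ λⱼ(H)` for every `j`. -/
theorem stmt_8 (n : ℕ) (H C : Matrix (Fin n) (Fin n) ℝ)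
    (hH : H.PosSemidef) (hC : C.IsDiag) (hC1 : ∀ i, 0 < C i i) (hC2 : ∀ i, C i i ≤ 1) :
    Multiset.card (H * C).charpoly.roots = n ∧
    Multiset.card H.charpoly.roots = n ∧
    ∀ j : Fin n,
      (((H * C).charpoly.roots.sort (· ≥ ·)).getD j 0) ≤
        ((H.charpoly.roots.sort (· ≥ ·)).getD j 0) :=
  stmt_8_general n H C hH hC hC2
end
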